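/- Under the standing hypotheses, let e be any edge of T and assume that removing e from T leaves two connected components C₁ and C₂. Then for any points a, b ∈ C with a ∈ C₁^ε and b ∈ C₂^ε, and any shortest path s connecting a to b in the graph G, there exists a point p ∈ C lying on the path s with p ∈ e^ε. -/

import Mathlib

open scoped Classical

noncomputable section

namespace Skel

/-- `m`-dimensional Euclidean space. -/
abbrev Euc (m : ℕ) : Type := EuclideanSpace ℝ (Fin m)

/-- Length (Euclidean distance between the two members) of an unordered pair of points. -/
def sym2Dist {X : Type*} [PseudoMetricSpace X] : Sym2 X → ℝ :=
  Sym2.lift ⟨fun u v => dist u v, fun u v => dist_comm u v⟩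

/-- Euclidean length of an edge under a vertex placement `pos`. -/
def edgeLen {V : Type*} {m : ℕ} (pos : V → Euc m) (e : Sym2 V) : ℝ :=
  sym2Dist (e.map pos)

/-- Straight-line segment realizing an unordered pair of vertices. -/
def edgeSeg {V : Type*} {m : ℕ} (pos : V → Euc m) : Sym2 V → Set (Euc m) :=
  Sym2.lift ⟨fun u v => segment ℝ (pos u) (pos v), fun u v => segment_symm ℝ (pos u) (pos v)⟩

/-- Closed `ε`-offset of a set. -/
def offset {X : Type*} [PseudoMetricSpace X] (S : Set X) (ε : ℝ) : Set X :=
  {x | ∃ y ∈ S, dist x y ≤ ε}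

/-- Geometric realization (union of straight-line edges) of a graph. -/
def shape {V : Type*} {m : ℕ} (G : SimpleGraph V) (pos : V → Euc m) : Set (Euc m) :=
  ⋃ e ∈ G.edgeSet, edgeSeg pos e

/-- Geometric realization of the portion of a graph inside a vertex subset `S`. -/
def shapeOn {V : Type*} {m : ℕ} (G : SimpleGraph V) (pos : V → Euc m) (S : Set V) :
    Set (Euc m) :=
  (pos '' S) ∪ ⋃ e ∈ {e ∈ G.edgeSet | ∀ x ∈ e, x ∈ S}, edgeSeg pos e

/-- Total length of a walk in a geometric graph. -/
def walkCost {X : Type*} [PseudoMetricSpace X] {G : SimpleGraph X} {u v : X}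
    (p : G.Walk u v) : ℝ :=
  (p.edges.map sym2Dist).sum

/-- Shortest-path metric of a geometric graph (edges weighted by Euclidean length). -/
def pathDist {X : Type*} [PseudoMetricSpace X] (G : SimpleGraph X) (u v : X) : ℝ :=
  sInf {c | ∃ p : G.Walk u v, walkCost p = c}

/-- Maximal edge length of a geometric graph. -/
def lmax {X : Type*} [PseudoMetricSpace X] (G : SimpleGraph X) : ℝ :=
  sSup (sym2Dist '' G.edgeSet)

/-- Minimal distance between two sets. -/
def setDist {X : Type*} [PseudoMetricSpace X] (s t : Set X) : ℝ :=
  sInf {d | ∃ x ∈ s, ∃ y ∈ t, d = dist x y}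

/-- Two edges (unordered pairs) are non-adjacent: distinct and sharing no vertex. -/
def nonAdjacent {V : Type*} (e h : Sym2 V) : Prop :=
  e ≠ h ∧ ∀ x, x ∈ e → x ∉ h

/-- The set of angles between pairs of (distinct) edges adjacent at a common vertex. -/
def angleSet {V : Type*} {m : ℕ} (T : SimpleGraph V) (pos : V → Euc m) : Set ℝ :=
  {θ | ∃ v a b : V, T.Adj v a ∧ T.Adj v b ∧ a ≠ b ∧
    θ = EuclideanGeometry.angle (pos a) (pos v) (pos b)}

/-- Total edge cost of a graph, edges weighted by `d`. -/
def graphCost {X : Type*} (d : X → X → ℝ) (W : SimpleGraph X) : ℝ :=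
  (∑ᶠ u, ∑ᶠ v, if W.Adj u v then d u v else 0) / 2

/-- A minimum spanning tree on the whole vertex type, edges weighted by `d`. -/
def IsMST {X : Type*} (d : X → X → ℝ) (W : SimpleGraph X) : Prop :=
  W.IsTree ∧ ∀ W' : SimpleGraph X, W'.IsTree → graphCost d W ≤ graphCost d W'

/-- A graph on an ambient type whose edges lie in `S` and which spans `S` as a tree. -/
def IsSpanningTreeOn {X : Type*} (S : Set X) (W : SimpleGraph X) : Prop :=
  (∀ a b, W.Adj a b → a ∈ S ∧ b ∈ S) ∧ (W.induce S).IsTree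

/-- A minimum spanning tree of the metric subspace `(S, d)`, realized on the ambient type. -/
def IsMSTOn {X : Type*} (d : X → X → ℝ) (S : Set X) (W : SimpleGraph X) : Prop :=
  IsSpanningTreeOn S W ∧
    ∀ W' : SimpleGraph X, IsSpanningTreeOn S W' → graphCost d W ≤ graphCost d W'

/-- Graph-cover `(𝒱, ℰ)` of the space `X`. -/
def IsGraphCover {X : Type*} (V : Set X) (E : Set (Set X)) : Prop :=
  V.Finite ∧ E.Finite ∧ ⋃₀ E = Set.univ ∧
    (∀ A ∈ E, ∀ B ∈ E, A ≠ B → (A ∩ B).Subsingleton ∧ A ∩ B ⊆ V) ∧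
    (∀ A ∈ E, ∃ u v : X, u ≠ v ∧ V ∩ A = {u, v})

/-- Underlying simple graph of the nerve of a cover. -/
def nerve {X : Type*} (V : Set X) (E : Set (Set X)) : SimpleGraph V where
  Adj u v := u ≠ v ∧ ∃ A ∈ E, (u : X) ∈ A ∧ (v : X) ∈ A
  symm := ⟨by
    rintro u v ⟨h, A, hA, hu, hv⟩
    exact ⟨Ne.symm h, A, hA, hv, hu⟩⟩
  loopless := ⟨by
    rintro u ⟨h, -⟩
    exact h rfl⟩

/-- The nerve, as a multigraph with one edge per cover set, is a tree:
its underlying simple graph is a tree and there are no parallel edges. -/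
def NerveIsTree {X : Type*} (V : Set X) (E : Set (Set X)) : Prop :=
  (nerve V E).IsTree ∧
    ∀ A ∈ E, ∀ B ∈ E, ∀ u v : X, u ≠ v → u ∈ V → v ∈ V →
      u ∈ A → v ∈ A → u ∈ B → v ∈ B → A = B

/-- Tree-cover of a space with distance function `d`. -/
def IsTreeCover {X : Type*} (d : X → X → ℝ) (V : Set X) (E : Set (Set X)) : Prop :=
  IsGraphCover V E ∧ NerveIsTree V E ∧
    ∀ u v : X, u ≠ v → (¬ ∃ A ∈ E, u ∈ A ∧ v ∈ A) →
      ∃ t : X, max (d u t) (d v t) < d u v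

/-- Standing hypotheses: `T` is a straight-line tree realized by `pos` in `ℝ^m`,
`C` is an `ε`-sample of `T`, `G` is a connected graph with vertex set `C` which is a
`γ`-approximation of `(T, C)`, `D ⊆ C` is `δ`-sparse in the path metric of `G`,
every vertex of `T` lies within `ε` of `D`, `θT` is the minimal angle between adjacent
edges of `T`, and `δ` satisfies the key inequality. -/
structure Standing {V : Type*} {m : ℕ} (T : SimpleGraph V) (pos : V → Euc m)
    (C D : Set (Euc m)) (G : SimpleGraph (Euc m)) (γ ε δ θT : ℝ) : Prop where
  tree : T.IsTree
  pos_inj : Function.Injective pos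
  eps_pos : 0 < ε
  gamma_ge : 1 ≤ γ
  C_fin : C.Finite
  sample : ∀ p ∈ C, ∃ q ∈ shape T pos, dist p q ≤ ε
  G_support : ∀ a b, G.Adj a b → a ∈ C ∧ b ∈ C
  G_conn : ∀ a ∈ C, ∀ b ∈ C, G.Reachable a b
  approx1 : ∀ e ∈ T.edgeSet, ∀ a ∈ C, ∀ b ∈ C,
      a ∈ offset (edgeSeg pos e) ε → b ∈ offset (edgeSeg pos e) ε →
      pathDist G a b ≤ γ * dist a b
  approx2 : ∀ e ∈ T.edgeSet, ∀ h ∈ T.edgeSet, nonAdjacent e h →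
      lmax G + 2 * ε < setDist (edgeSeg pos e) (edgeSeg pos h)
  D_sub : D ⊆ C
  sparse : ∀ a ∈ D, ∀ b ∈ D, a ≠ b → δ ≤ pathDist G a b
  vert_close : ∀ v : V, ∃ p ∈ D, dist (pos v) p ≤ ε
  theta_least : IsLeast (angleSet T pos) θT
  delta_ge : 2 * γ * (ε + ε / Real.sin (θT / 2)
      + lmax G / Real.sin (min θT (Real.pi / 2))) ≤ δ

end Skel

open Skel

/-!
A cloud point outside `e^ε` lies within `ε` of an edge of `T` other than `e`, that is, of an
edge with both ends in `C₁` or both ends in `C₂`. An edge on the `C₁` side and one on the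
`C₂` side share no vertex, so by the second approximation condition points within `ε` of
them are more than `l_max(G)` apart. Hence no point is near both sides, and along a walk in
`G` avoiding `e^ε` consecutive vertices stay near the same side; but the walk starts near
the `C₁` side and ends near the `C₂` side.
-/

namespace Skel

lemma setDist_le_dist {X : Type*} [PseudoMetricSpace X] {s t : Set X} {x y : X}
    (hx : x ∈ s) (hy : y ∈ t) : setDist s t ≤ dist x y :=
  csInf_le ⟨0, by rintro d ⟨u, -, v, -, rfl⟩; exact dist_nonneg⟩ ⟨x, hx, y, hy, rfl⟩

lemma sym2Dist_nonneg {X : Type*} [PseudoMetricSpace X] (z : Sym2 X) : 0 ≤ sym2Dist z := by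
  induction z using Sym2.ind with
  | _ u v => exact dist_nonneg

lemma lmax_nonneg {X : Type*} [PseudoMetricSpace X] (G : SimpleGraph X) : 0 ≤ lmax G :=
  Real.sSup_nonneg <| by rintro x ⟨z, -, rfl⟩; exact sym2Dist_nonneg z

lemma dist_le_lmax {X : Type*} [PseudoMetricSpace X] {G : SimpleGraph X} {C : Set X}
    (hC : C.Finite) (hG : ∀ a b, G.Adj a b → a ∈ C ∧ b ∈ C) {p q : X} (h : G.Adj p q) :
    dist p q ≤ lmax G := by
  have hsub : sym2Dist '' G.edgeSet ⊆ (fun x : X × X => dist x.1 x.2) '' (C ×ˢ C) := by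
    rintro _ ⟨z, hz, rfl⟩
    induction z using Sym2.ind with
    | _ u v => exact ⟨(u, v), hG u v hz, rfl⟩
  exact le_csSup ((((hC.prod hC).image _).bddAbove).mono hsub) ⟨s(p, q), h, rfl⟩

lemma support_subset_of_adj_mem {X : Type*} {G : SimpleGraph X} {C : Set X}
    (hG : ∀ a b, G.Adj a b → a ∈ C ∧ b ∈ C) {a b : X} (w : G.Walk a b) (ha : a ∈ C) :
    ∀ p ∈ w.support, p ∈ C := by
  intro p hp
  rcases w.mem_support_iff.mp hp with rfl | hp
  · exact ha
  · rw [← w.map_snd_darts] at hp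
    obtain ⟨d, -, rfl⟩ := List.mem_map.mp hp
    exact (hG _ _ d.adj).2

lemma nonAdjacent_of_disjoint {V : Type*} {S₁ S₂ : Set V} (hdisj : Disjoint S₁ S₂)
    {h₁ h₂ : Sym2 V} (hh₁ : ∀ x ∈ h₁, x ∈ S₁) (hh₂ : ∀ x ∈ h₂, x ∈ S₂) :
    nonAdjacent h₁ h₂ := by
  refine ⟨?_, fun x hx₁ hx₂ => hdisj.notMem_of_mem_left (hh₁ x hx₁) (hh₂ x hx₂)⟩
  rintro rfl
  exact hdisj.notMem_of_mem_left (hh₁ _ h₁.out_fst_mem) (hh₂ _ h₁.out_fst_mem)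

lemma forall_mem_or_forall_mem_of_ne {V : Type*} {T : SimpleGraph V} {e : Sym2 V}
    {C₁ C₂ : Set V}
    (hcomp : ∀ x y : V, (T.deleteEdges {e}).Reachable x y →
        ((x ∈ C₁ ∧ y ∈ C₁) ∨ (x ∈ C₂ ∧ y ∈ C₂)))
    {h : Sym2 V} (hh : h ∈ T.edgeSet) (hne : h ≠ e) :
    (∀ x ∈ h, x ∈ C₁) ∨ (∀ x ∈ h, x ∈ C₂) := by
  induction h using Sym2.ind with
  | _ x y =>
    have hdel : (T.deleteEdges {e}).Adj x y := by
      rw [SimpleGraph.deleteEdges_adj]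
      exact ⟨hh, by simpa using hne⟩
    rcases hcomp x y hdel.reachable with ⟨hx, hy⟩ | ⟨hx, hy⟩
    · exact .inl fun z hz => by rcases Sym2.mem_iff.mp hz with rfl | rfl <;> assumption
    · exact .inr fun z hz => by rcases Sym2.mem_iff.mp hz with rfl | rfl <;> assumption

section NearEdge

variable {V : Type*} {m : ℕ} {T : SimpleGraph V} {pos : V → Euc m} {ε : ℝ}

def IsNearEdgeOn (T : SimpleGraph V) (pos : V → Euc m) (S : Set V) (ε : ℝ) (p : Euc m) :
    Prop :=
  ∃ h ∈ T.edgeSet, (∀ x ∈ h, x ∈ S) ∧ p ∈ offset (edgeSeg pos h) ε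

lemma lmax_lt_dist_of_isNearEdgeOn {X : Type*} [PseudoMetricSpace X] {G : SimpleGraph X}
    (happrox2 : ∀ e ∈ T.edgeSet, ∀ h ∈ T.edgeSet, nonAdjacent e h →
        lmax G + 2 * ε < setDist (edgeSeg pos e) (edgeSeg pos h))
    {S₁ S₂ : Set V} (hdisj : Disjoint S₁ S₂) {p q : Euc m}
    (hp : IsNearEdgeOn T pos S₁ ε p) (hq : IsNearEdgeOn T pos S₂ ε q) :
    lmax G < dist p q := by
  obtain ⟨h₁, hh₁, hin₁, z₁, hz₁, hd₁⟩ := hp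
  obtain ⟨h₂, hh₂, hin₂, z₂, hz₂, hd₂⟩ := hq
  have hfar := happrox2 h₁ hh₁ h₂ hh₂ (nonAdjacent_of_disjoint hdisj hin₁ hin₂)
  have hclose : dist z₁ z₂ ≤ dist p z₁ + dist p q + dist q z₂ := by
    simpa only [dist_comm z₁ p] using dist_triangle4 z₁ p q z₂
  linarith [setDist_le_dist hz₁ hz₂]

lemma isNearEdgeOn_or_of_mem_offset_shape {e : Sym2 V} {C₁ C₂ : Set V}
    (hcomp : ∀ x y : V, (T.deleteEdges {e}).Reachable x y →
        ((x ∈ C₁ ∧ y ∈ C₁) ∨ (x ∈ C₂ ∧ y ∈ C₂)))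
    {p : Euc m} (hp : p ∈ offset (shape T pos) ε) (hpe : p ∉ offset (edgeSeg pos e) ε) :
    IsNearEdgeOn T pos C₁ ε p ∨ IsNearEdgeOn T pos C₂ ε p := by
  obtain ⟨q, hq, hpq⟩ := hp
  simp only [shape, Set.mem_iUnion] at hq
  obtain ⟨h, hh, hqh⟩ := hq
  have hne : h ≠ e := by
    rintro rfl
    exact hpe ⟨q, hqh, hpq⟩
  exact (forall_mem_or_forall_mem_of_ne hcomp hh hne).imp
    (fun hin => ⟨h, hh, hin, q, hqh, hpq⟩) (fun hin => ⟨h, hh, hin, q, hqh, hpq⟩)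

lemma isNearEdgeOn_of_mem_offset_shapeOn (hT : T.Preconnected) {e : Sym2 V}
    (he : e ∈ T.edgeSet) {C₁ C₂ : Set V}
    (hcomp : ∀ x y : V, (T.deleteEdges {e}).Reachable x y →
        ((x ∈ C₁ ∧ y ∈ C₁) ∨ (x ∈ C₂ ∧ y ∈ C₂)))
    (hdisj : Disjoint C₁ C₂) {p : Euc m} (hp : p ∈ offset (shapeOn T pos C₁) ε)
    (hpe : p ∉ offset (edgeSeg pos e) ε) : IsNearEdgeOn T pos C₁ ε p := by
  obtain ⟨w, hw, hpw⟩ := hp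
  rcases hw with ⟨x, hx, rfl⟩ | hw
  · have : Nontrivial V := by
      induction e using Sym2.ind with
      | _ u v => exact ⟨u, v, T.ne_of_adj he⟩
    obtain ⟨y, hxy⟩ : x ∈ T.support := hT.support_eq_univ ▸ Set.mem_univ x
    have hxe : pos x ∈ edgeSeg pos s(x, y) := left_mem_segment ℝ (pos x) (pos y)
    have hne : s(x, y) ≠ e := by
      rintro rfl
      exact hpe ⟨pos x, hxe, hpw⟩
    rcases forall_mem_or_forall_mem_of_ne hcomp hxy hne with hin | hin
    · exact ⟨s(x, y), hxy, hin, pos x, hxe, hpw⟩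
    · exact absurd (hin x (Sym2.mem_mk_left x y)) (hdisj.notMem_of_mem_left hx)
  · simp only [Set.mem_iUnion] at hw
    obtain ⟨h, ⟨hh, hin⟩, hwh⟩ := hw
    exact ⟨h, hh, hin, w, hwh, hpw⟩

end NearEdge

end Skel

theorem statement13_general {m : ℕ} {V : Type*}
    (T : SimpleGraph V) (hT : T.IsTree) (pos : V → Euc m)
    (C : Set (Euc m)) (hC : C.Finite)
    (G : SimpleGraph (Euc m)) (ε : ℝ)
    (hsample : ∀ p ∈ C, ∃ q ∈ shape T pos, dist p q ≤ ε)
    (hGsupport : ∀ a b, G.Adj a b → a ∈ C ∧ b ∈ C)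
    (happrox2 : ∀ e ∈ T.edgeSet, ∀ h ∈ T.edgeSet, nonAdjacent e h →
        lmax G + 2 * ε < setDist (edgeSeg pos e) (edgeSeg pos h))
    (e : Sym2 V) (he : e ∈ T.edgeSet)
    (C₁ C₂ : Set V)
    (hdisj : Disjoint C₁ C₂)
    (hcomp : ∀ x y : V, (T.deleteEdges {e}).Reachable x y ↔
        ((x ∈ C₁ ∧ y ∈ C₁) ∨ (x ∈ C₂ ∧ y ∈ C₂)))
    (a b : Euc m) (haC : a ∈ C)
    (ha : a ∈ offset (shapeOn T pos C₁) ε) (hb : b ∈ offset (shapeOn T pos C₂) ε)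
    (s : G.Walk a b) :
    ∃ p ∈ s.support, p ∈ C ∧ p ∈ offset (edgeSeg pos e) ε := by
  by_contra! hcon
  have hcomp₁ := fun x y => (hcomp x y).mp
  have hcomp₂ := fun x y h => (hcomp₁ x y h).symm
  have hsupp := support_subset_of_adj_mem hGsupport s haC
  have hfar : ∀ p ∈ s.support, p ∉ offset (edgeSeg pos e) ε :=
    fun p hp => hcon p hp (hsupp p hp)
  have hside : ∀ p ∈ s.support, IsNearEdgeOn T pos C₁ ε p ∨ IsNearEdgeOn T pos C₂ ε p :=
    fun p hp => isNearEdgeOn_or_of_mem_offset_shape hcomp₁ (hsample p (hsupp p hp)) (hfar p hp)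
  have hexcl : ∀ p, IsNearEdgeOn T pos C₁ ε p → ¬ IsNearEdgeOn T pos C₂ ε p := fun p h₁ h₂ =>
    (lmax_lt_dist_of_isNearEdgeOn (G := G) happrox2 hdisj h₁ h₂).not_ge
      (by simpa only [dist_self] using lmax_nonneg G)
  have ha₁ := isNearEdgeOn_of_mem_offset_shapeOn hT.connected.preconnected he hcomp₁ hdisj ha
    (hfar a s.start_mem_support)
  have hb₂ := isNearEdgeOn_of_mem_offset_shapeOn hT.connected.preconnected he hcomp₂ hdisj.symm hb
    (hfar b s.end_mem_support)
  obtain ⟨d, hd, hd₁, hd₂⟩ :=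
    s.exists_boundary_dart {p | IsNearEdgeOn T pos C₁ ε p} ha₁ (hexcl b · hb₂)
  have hsnd := (hside d.snd (s.dart_snd_mem_support_of_mem_darts hd)).resolve_left hd₂
  exact (lmax_lt_dist_of_isNearEdgeOn happrox2 hdisj hd₁ hsnd).not_ge
    (dist_le_lmax hC hGsupport d.adj)

/-- If removing an edge `e` from `T` leaves two connected components `C₁, C₂`, then any
shortest path in `G` between a cloud point near `C₁` and a cloud point near `C₂` passes
through a cloud point lying in `e^ε`. -/
theorem statement13 {m : ℕ} {V : Type*} [Finite V]
    (T : SimpleGraph V) (hT : T.IsTree) (pos : V → Euc m)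
    (hpos : Function.Injective pos)
    (C : Set (Euc m)) (hC : C.Finite)
    (G : SimpleGraph (Euc m)) (γ ε : ℝ) (hε : 0 < ε) (hγ : 1 ≤ γ)
    (hsample : ∀ p ∈ C, ∃ q ∈ shape T pos, dist p q ≤ ε)
    (hGsupport : ∀ a b, G.Adj a b → a ∈ C ∧ b ∈ C)
    (hGconn : ∀ a ∈ C, ∀ b ∈ C, G.Reachable a b)
    (happrox1 : ∀ e ∈ T.edgeSet, ∀ a ∈ C, ∀ b ∈ C,
        a ∈ offset (edgeSeg pos e) ε → b ∈ offset (edgeSeg pos e) ε →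
        pathDist G a b ≤ γ * dist a b)
    (happrox2 : ∀ e ∈ T.edgeSet, ∀ h ∈ T.edgeSet, nonAdjacent e h →
        lmax G + 2 * ε < setDist (edgeSeg pos e) (edgeSeg pos h))
    (e : Sym2 V) (he : e ∈ T.edgeSet)
    (C₁ C₂ : Set V) (hne₁ : C₁.Nonempty) (hne₂ : C₂.Nonempty)
    (hdisj : Disjoint C₁ C₂) (hunion : C₁ ∪ C₂ = Set.univ)
    (hcomp : ∀ x y : V, (T.deleteEdges {e}).Reachable x y ↔
        ((x ∈ C₁ ∧ y ∈ C₁) ∨ (x ∈ C₂ ∧ y ∈ C₂)))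
    (a b : Euc m) (haC : a ∈ C) (hbC : b ∈ C)
    (ha : a ∈ offset (shapeOn T pos C₁) ε) (hb : b ∈ offset (shapeOn T pos C₂) ε)
    (s : G.Walk a b) (hs : walkCost s = pathDist G a b) :
    ∃ p ∈ s.support, p ∈ C ∧ p ∈ offset (edgeSeg pos e) ε :=
  statement13_general T hT pos C hC G ε hsample hGsupport happrox2 e he C₁ C₂ hdisj hcomp a b haC ha
    hb s
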